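/- Let B ∈ ℕ, let b₁,…,b_B > 0, and let (β_j¹)_{j=1}^B, (β_j²)_{j=1}^B be two strictly increasing tuples in (0,1). If Σ_{j=1}^B b_j s^{β_j¹} = Σ_{j=1}^B b_j s^{β_j²} for all s in some interval (0,ε) with ε > 0, then β_j¹ = β_j² for all j = 1,…,B. -/
import Mathlib

open Filter Topology

private lemma key_aux (B : ℕ) (b : Fin B → ℝ) (hb : ∀ j, 0 < b j)
    (β₁ β₂ : Fin B → ℝ) (hmono₁ : StrictMono β₁) (hmono₂ : StrictMono β₂)
    (ε : ℝ) (hε : 0 < ε)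
    (heq : ∀ s ∈ Set.Ioo (0 : ℝ) ε, ∑ j, b j * s ^ (β₁ j) = ∑ j, b j * s ^ (β₂ j))
    (j₀ : Fin B) (hprev : ∀ i, i < j₀ → β₁ i = β₂ i) (hj : β₁ j₀ < β₂ j₀) : False := by
  set c := β₁ j₀ with hc
  set T : Finset (Fin B) := Finset.univ.filter (fun i => j₀ ≤ i) with hT
  set F : ℝ → ℝ := fun s => ∑ i ∈ T, (b i * s ^ (β₁ i - c) - b i * s ^ (β₂ i - c)) with hF
  have hj₀T : j₀ ∈ T := by simp [hT]
  have hF0 : ∀ s ∈ Set.Ioo (0:ℝ) ε, F s = 0 := by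
    intro s hs
    have hs0 : (0:ℝ) < s := hs.1
    have key : ∑ i ∈ T, (b i * s ^ (β₁ i) - b i * s ^ (β₂ i)) = 0 := by
      have h1 : ∑ i ∈ T, (b i * s ^ (β₁ i) - b i * s ^ (β₂ i))
          = ∑ i, (b i * s ^ (β₁ i) - b i * s ^ (β₂ i)) := by
        apply Finset.sum_filter_of_ne
        intro i _ hne
        by_contra hle
        push_neg at hle
        rw [hprev i hle] at hne
        simp at hne
      rw [h1, Finset.sum_sub_distrib, heq s hs, sub_self]
    have hmul : F s * s ^ c = 0 := by
      rw [hF, Finset.sum_mul, ← key]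
      apply Finset.sum_congr rfl
      intro i _
      have e1 : s ^ (β₁ i - c) * s ^ c = s ^ (β₁ i) := by
        rw [← Real.rpow_add hs0]; ring_nf
      have e2 : s ^ (β₂ i - c) * s ^ c = s ^ (β₂ i) := by
        rw [← Real.rpow_add hs0]; ring_nf
      rw [sub_mul, mul_assoc, mul_assoc, e1, e2]
    have hpow : s ^ c ≠ 0 := ne_of_gt (Real.rpow_pos_of_pos hs0 c)
    exact (mul_eq_zero.mp hmul).resolve_right hpow
  have hsum : ∑ i ∈ T, (b i * (0:ℝ) ^ (β₁ i - c) - b i * (0:ℝ) ^ (β₂ i - c)) = b j₀ := by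
    rw [Finset.sum_eq_single j₀]
    · have h2 : (0:ℝ) < β₂ j₀ - c := sub_pos.mpr hj
      rw [sub_self, Real.rpow_zero, Real.zero_rpow (ne_of_gt h2)]
      ring
    · intro i hiT hne
      have hle : j₀ ≤ i := (Finset.mem_filter.mp hiT).2
      have hlt : j₀ < i := lt_of_le_of_ne hle (Ne.symm hne)
      have h1 : (0:ℝ) < β₁ i - c := sub_pos.mpr (hmono₁ hlt)
      have h2 : (0:ℝ) < β₂ i - c := sub_pos.mpr (lt_trans hj (hmono₂ hlt))
      rw [Real.zero_rpow (ne_of_gt h1), Real.zero_rpow (ne_of_gt h2)]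
      ring
    · intro h; exact absurd hj₀T h
  have hlim : Tendsto F (𝓝[>] (0:ℝ)) (𝓝 (b j₀)) := by
    rw [← hsum]
    apply tendsto_finset_sum
    intro i hiT
    have hle : j₀ ≤ i := (Finset.mem_filter.mp hiT).2
    have h1 : 0 ≤ β₁ i - c := sub_nonneg.mpr (hmono₁.monotone hle)
    have h2 : 0 ≤ β₂ i - c := sub_nonneg.mpr (le_trans (le_of_lt hj) (hmono₂.monotone hle))
    have c1 : ContinuousAt (fun s : ℝ => s ^ (β₁ i - c)) 0 :=
      Real.continuousAt_rpow_const 0 _ (Or.inr h1)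
    have c2 : ContinuousAt (fun s : ℝ => s ^ (β₂ i - c)) 0 :=
      Real.continuousAt_rpow_const 0 _ (Or.inr h2)
    exact Tendsto.sub
      (Tendsto.const_mul _ (c1.tendsto.mono_left nhdsWithin_le_nhds))
      (Tendsto.const_mul _ (c2.tendsto.mono_left nhdsWithin_le_nhds))
  have hzero : Tendsto F (𝓝[>] (0:ℝ)) (𝓝 0) := by
    have hmem : Set.Ioo (0:ℝ) ε ∈ 𝓝[>] (0:ℝ) := Ioo_mem_nhdsGT_of_mem (by simp [hε])
    have hev : F =ᶠ[𝓝[>] (0:ℝ)] (fun _ => 0) :=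
      eventually_of_mem hmem (fun s hs => hF0 s hs)
    exact Tendsto.congr' hev.symm tendsto_const_nhds
  have : b j₀ = 0 := tendsto_nhds_unique hlim hzero
  exact absurd this (ne_of_gt (hb j₀))

/-- Two multi-term fractional symbols `Σⱼ bⱼ s^{βⱼ}` with the same positive
coefficients and strictly increasing exponent tuples in `(0,1)` that agree on some
interval `(0,ε)` must have identical exponents. -/
theorem fractional_orders_unique (B : ℕ) (b : Fin B → ℝ) (hb : ∀ j, 0 < b j)
    (β₁ β₂ : Fin B → ℝ) (hmono₁ : StrictMono β₁) (hmono₂ : StrictMono β₂)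
    (hr₁ : ∀ j, β₁ j ∈ Set.Ioo (0 : ℝ) 1) (hr₂ : ∀ j, β₂ j ∈ Set.Ioo (0 : ℝ) 1)
    (ε : ℝ) (hε : 0 < ε)
    (heq : ∀ s ∈ Set.Ioo (0 : ℝ) ε, ∑ j, b j * s ^ (β₁ j) = ∑ j, b j * s ^ (β₂ j)) :
    ∀ j, β₁ j = β₂ j := by
  by_contra hcon
  push_neg at hcon
  obtain ⟨j, hjne⟩ := hcon
  set S : Finset (Fin B) := Finset.univ.filter (fun i => β₁ i ≠ β₂ i) with hS
  have hSne : S.Nonempty := ⟨j, by simp [hS, hjne]⟩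
  set j₀ := S.min' hSne with hj₀
  have hj₀S : j₀ ∈ S := S.min'_mem hSne
  have hj₀ne : β₁ j₀ ≠ β₂ j₀ := (Finset.mem_filter.mp hj₀S).2
  have hprev : ∀ i, i < j₀ → β₁ i = β₂ i := by
    intro i hi
    by_contra hne
    exact absurd (S.min'_le i (by simp [hS, hne])) (not_le.mpr hi)
  rcases lt_or_gt_of_ne hj₀ne with h | h
  · exact key_aux B b hb β₁ β₂ hmono₁ hmono₂ ε hε heq j₀ hprev h
  · exact key_aux B b hb β₂ β₁ hmono₂ hmono₁ ε hε
      (fun s hs => (heq s hs).symm) j₀ (fun i hi => (hprev i hi).symm) h
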